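/- In a monomolecular reaction network, metabolite influence is transitive: if m*, p₁, p₂ are elements with m* a metabolite, and m* ⇝ p₁ and p₁ ⇝ p₂, then m* ⇝ p₂. -/

import Mathlib

open scoped Classical

/-- The field of rational functions in the indeterminates indexed by σ. -/
noncomputable abbrev RatFunField (σ : Type) := FractionRing (MvPolynomial σ ℝ)

/-!
Write `A = S R` for the Jacobian with generic rates `r (j, k)`. If `m'` is not reachable from `m`,
the species reachable from `m` span an `A`-invariant coordinate subspace, so `A⁻¹` is block
triangular and `(A⁻¹) m' m = 0`. The same block structure shows that, when `det A ≠ 0`, every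
species reaches a reaction with outflow: otherwise the rows of its reachable set sum to zero on
the corresponding columns of `A`.

Conversely, if `m'` is reachable from `m`, pick one outgoing reaction for every species other
than `m'`, along shortest paths towards `m'` where possible and towards an outflow otherwise.
Specialising the rates to `-1` on the chosen reactions and `0` elsewhere turns `A`, away from
column `m'`, into `1 - T` with `T` the nilpotent matrix of the chosen forest. The cofactor
`(m', m)` ignores column `m'`, so it specialises to `det (1 - T) * (1 - T)⁻¹ m' m`, and
`(1 - T)⁻¹ m' m = 1` because the forest leads from `m` to `m'`.

Thus metabolite–metabolite influence is reachability, a metabolite influences a reaction iff it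
reaches the reaction's source, and a reaction's influence only propagates from its source, so
transitivity of influence reduces to transitivity of reachability.
-/

namespace Relation

variable {α : Type*} (E : α → α → Prop) (T : α → Prop)

def ReachesWithin : ℕ → α → Prop
  | 0, a => T a
  | n + 1, a => T a ∨ ∃ b, E a b ∧ ReachesWithin n b

variable {E T}

theorem exists_reachesWithin_of_reflTransGen {a t : α} (ht : T t) (h : ReflTransGen E a t) :
    ∃ n, ReachesWithin E T n a := by
  induction h using ReflTransGen.head_induction_on with
  | refl => exact ⟨0, ht⟩
  | head hac _ ih =>
    obtain ⟨n, hn⟩ := ih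
    exact ⟨n + 1, Or.inr ⟨_, hac, hn⟩⟩

theorem ReachesWithin.exists_reflTransGen :
    ∀ {n : ℕ} {a : α}, ReachesWithin E T n a → ∃ t, T t ∧ ReflTransGen E a t
  | 0, a, h => ⟨a, h, .refl⟩
  | _ + 1, a, .inl h => ⟨a, h, .refl⟩
  | _ + 1, _, .inr ⟨_, hab, h⟩ =>
    let ⟨t, ht, hbt⟩ := h.exists_reflTransGen
    ⟨t, ht, .head hab hbt⟩

variable (E T)

theorem exists_rank_descent :
    ∃ (f : α → α) (d : α → ℕ), ∀ a, ¬ T a → (∃ t, T t ∧ ReflTransGen E a t) →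
      E a (f a) ∧ d (f a) < d a ∧ ∃ t, T t ∧ ReflTransGen E (f a) t := by
  let d a := if h : ∃ n, ReachesWithin E T n a then Nat.find h else 0
  have hstep : ∀ a, ∃ b, ¬ T a → (∃ t, T t ∧ ReflTransGen E a t) →
      E a b ∧ d b < d a ∧ ∃ t, T t ∧ ReflTransGen E b t := by
    intro a
    by_cases hreach : ¬ T a ∧ ∃ t, T t ∧ ReflTransGen E a t
    · obtain ⟨hTa, t, ht, hat⟩ := hreach
      have hex := exists_reachesWithin_of_reflTransGen ht hat
      obtain ⟨n, hn⟩ : ∃ n, Nat.find hex = n + 1 :=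
        Nat.exists_eq_succ_of_ne_zero fun h0 => hTa ((Nat.find_eq_zero hex).1 h0)
      have hspec := Nat.find_spec hex
      rw [hn] at hspec
      obtain ⟨b, hab, hb⟩ := hspec.resolve_left hTa
      have hdb : d b ≤ n := by
        simp only [d, dif_pos (⟨n, hb⟩ : ∃ n, ReachesWithin E T n b)]
        exact Nat.find_min' _ hb
      have hda : d a = n + 1 := (dif_pos hex).trans hn
      exact ⟨b, fun _ _ => ⟨hab, by omega, hb.exists_reflTransGen⟩⟩
    · exact ⟨a, fun hTa hr => absurd ⟨hTa, hr⟩ hreach⟩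
  choose f hf using hstep
  exact ⟨f, d, hf⟩

theorem reflTransGen_of_rank_descent {f : α → α} {d : α → ℕ} {P : α → Prop} {b : α}
    (h : ∀ k, P k → k ≠ b → P (f k) ∧ d (f k) < d k) {a : α} (ha : P a) :
    ReflTransGen (fun k i => P k ∧ k ≠ b ∧ f k = i) a b := by
  induction hn : d a using Nat.strong_induction_on generalizing a with
  | _ n ih =>
    by_cases hab : a = b
    · exact hab ▸ .refl
    · obtain ⟨hfa, hlt⟩ := h a ha hab
      exact .head ⟨ha, hab, rfl⟩ (ih _ (hn ▸ hlt) hfa rfl)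

end Relation

open Relation

namespace Matrix

variable {n R : Type*} [Fintype n] [DecidableEq n]

theorem pow_apply_eq_zero_of_rank [Semiring R] {T : Matrix n n R} (d : n → ℕ)
    (hT : ∀ i k, T i k ≠ 0 → d i < d k) (p : ℕ) {i k : n} (h : d k < d i + p) :
    (T ^ p) i k = 0 := by
  induction p generalizing k with
  | zero => exact one_apply_ne (by rintro rfl; omega)
  | succ p ih =>
    rw [pow_succ, mul_apply]
    refine Finset.sum_eq_zero fun l _ => ?_
    by_cases hlk : T l k = 0
    · rw [hlk, mul_zero]
    · rw [ih (by have := hT l k hlk; omega), zero_mul]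

theorem isNilpotent_of_rank [Semiring R] {T : Matrix n n R} (d : n → ℕ)
    (hT : ∀ i k, T i k ≠ 0 → d i < d k) : IsNilpotent T :=
  ⟨Finset.univ.sup d + 1, ext fun _ k => pow_apply_eq_zero_of_rank d hT _ <| by
    have := Finset.le_sup (f := d) (Finset.mem_univ k); omega⟩

theorem adjugate_apply_eq_of_forall_ne [CommRing R] {M M' : Matrix n n R} {c : n}
    (h : ∀ i, ∀ k ≠ c, M i k = M' i k) (a : n) : M.adjugate c a = M'.adjugate c a := by
  rw [← transpose_apply M.adjugate, ← transpose_apply M'.adjugate, adjugate_transpose,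
    adjugate_transpose, adjugate_apply, adjugate_apply]
  congr 1
  ext k i
  by_cases hk : k = c
  · subst hk; simp
  · simp [updateRow_ne hk, h i k hk]

def succMatrix [Zero R] [One R] (next : n → Option n) : Matrix n n R :=
  of fun i k => if next k = some i then 1 else 0

theorem mul_succMatrix_apply [Semiring R] (next : n → Option n) (V : Matrix n n R) (i k : n) :
    (V * (succMatrix next : Matrix n n R)) i k = (next k).elim 0 (V i) := by
  rcases h : next k with _ | l <;> simp [mul_apply, succMatrix, h]

theorem inv_one_sub_succMatrix_apply [CommRing R] {next : n → Option n} {a b : n}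
    (hU : IsUnit (1 - succMatrix next : Matrix n n R).det) (hb : next b = none)
    (hab : ReflTransGen (fun k i => next k = some i) a b) :
    (1 - succMatrix next : Matrix n n R)⁻¹ b a = 1 := by
  set V := (1 - succMatrix next : Matrix n n R)⁻¹
  have hV : V = 1 + V * succMatrix next := by
    have hinv : V * (1 - succMatrix next) = 1 := nonsing_inv_mul _ hU
    rw [mul_sub, mul_one] at hinv
    exact eq_add_of_sub_eq hinv
  have hVb : ∀ k, V b k = (1 : Matrix n n R) b k + (next k).elim 0 (V b) := fun k => by
    conv_lhs => rw [hV]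
    rw [add_apply, mul_succMatrix_apply]
  induction hab using ReflTransGen.head_induction_on with
  | refl => simp [hVb b, hb]
  | head hac _ ih =>
    rw [hVb, hac, Option.elim, ih, one_apply_ne, zero_add]
    rintro rfl
    simp [hb] at hac

end Matrix

namespace ReactionNetwork

open Matrix MvPolynomial

variable {ι κ : Type*}

section Graph

-- `none` is the exterior: reactions with `src j = none` are inflows, `tgt j = none` outflows.
variable (src tgt : κ → Option ι)

def ReactionEdge (a b : ι) : Prop := ∃ j, src j = some a ∧ tgt j = some b

abbrev Reaches : ι → ι → Prop := ReflTransGen (ReactionEdge src tgt)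

def HasOutflow (a : ι) : Prop := ∃ j, src j = some a ∧ tgt j = none

variable {src tgt}

theorem exists_routing (hdrain : ∀ v, ∃ u, HasOutflow src tgt u ∧ Reaches src tgt v u)
    {a b : ι} (hab : Reaches src tgt a b) :
    ∃ (G : ι → κ) (d : ι → ℕ), (∀ k ≠ b, src (G k) = some k) ∧
      (∀ k ≠ b, ∀ i, tgt (G k) = some i → d i < d k) ∧
      ReflTransGen (fun k i => k ≠ b ∧ tgt (G k) = some i) a b := by
  obtain ⟨f₁, d₁, hf₁⟩ := exists_rank_descent (ReactionEdge src tgt) (· = b)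
  obtain ⟨f₂, d₂, hf₂⟩ := exists_rank_descent (ReactionEdge src tgt) (HasOutflow src tgt)
  let d k := if Reaches src tgt k b then d₁ k else d₂ k
  have hG : ∀ k, ∃ j, src j = some k ∧ (k ≠ b → ∀ i, tgt j = some i → d i < d k) ∧
      (Reaches src tgt k b → k ≠ b → tgt j = some (f₁ k)) := by
    intro k
    by_cases hk : Reaches src tgt k b ∧ k ≠ b
    · obtain ⟨⟨j, hsrc, htgt⟩, hlt, t, rfl, hreach⟩ := hf₁ k hk.2 ⟨b, rfl, hk.1⟩
      refine ⟨j, hsrc, fun _ i hi => ?_, fun _ _ => htgt⟩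
      obtain rfl : i = f₁ k := Option.some_inj.1 (hi.symm.trans htgt)
      simpa [d, hk.1, hreach] using hlt
    · by_cases hout : HasOutflow src tgt k
      · obtain ⟨j, hsrc, htgt⟩ := hout
        exact ⟨j, hsrc, by simp [htgt], fun h h' => absurd ⟨h, h'⟩ hk⟩
      · obtain ⟨⟨j, hsrc, htgt⟩, hlt, -⟩ := hf₂ k hout (hdrain k)
        refine ⟨j, hsrc, fun hkb i hi => ?_, fun h h' => absurd ⟨h, h'⟩ hk⟩
        obtain rfl : i = f₂ k := Option.some_inj.1 (hi.symm.trans htgt)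
        have hkb' : ¬ Reaches src tgt k b := fun h => hk ⟨h, hkb⟩
        have hib : ¬ Reaches src tgt (f₂ k) b := fun h => hkb' (.head ⟨j, hsrc, htgt⟩ h)
        simpa [d, hkb', hib] using hlt
  choose G hGsrc hGrank hGnext using hG
  refine ⟨G, d, fun k _ => hGsrc k, hGrank, ?_⟩
  refine ReflTransGen.mono (fun k i h => ⟨h.2.1, h.2.2 ▸ hGnext k h.1 h.2.1⟩) _ _
    (reflTransGen_of_rank_descent (f := f₁) (d := d₁) (P := (Reaches src tgt · b))
      (fun k hk hkb => ?_) hab)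
  obtain ⟨-, hlt, t, rfl, hreach⟩ := hf₁ k hkb ⟨b, rfl, hk⟩
  exact ⟨hreach, hlt⟩

end Graph

section GenericRate

variable (R : Type*) [CommRing R]

noncomputable def genericRate : κ × ι → FractionRing (MvPolynomial (κ × ι) R) :=
  fun q => algebraMap (MvPolynomial (κ × ι) R) _ (X q)

variable {R}

theorem genericRate_ne_zero [Nontrivial R] (q : κ × ι) : genericRate R q ≠ 0 :=
  (map_ne_zero_iff _ (IsFractionRing.injective (MvPolynomial (κ × ι) R) _)).2 (X_ne_zero q)

end GenericRate

section Matrices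

variable (src tgt : κ → Option ι) [DecidableEq ι] {R : Type*} [CommRing R]

def stoichiometricMatrix : Matrix ι κ R :=
  of fun i j => (if src j = some i then -1 else 0) + (if tgt j = some i then 1 else 0)

def rateMatrix (x : κ × ι → R) : Matrix κ ι R :=
  of fun j k => if src j = some k then x (j, k) else 0

def jacobian [Fintype κ] (x : κ × ι → R) : Matrix ι ι R :=
  (stoichiometricMatrix src tgt : Matrix ι κ R) * rateMatrix src x

variable {src tgt}

theorem stoichiometricMatrix_map {S : Type*} [CommRing S] (f : R →+* S) :
    (stoichiometricMatrix src tgt : Matrix ι κ R).map f = stoichiometricMatrix src tgt := by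
  ext i j
  simp [stoichiometricMatrix, apply_ite f]

theorem sum_stoichiometricMatrix_apply_eq_zero {s : Finset ι} {j : κ} {k t : ι}
    (hsrc : src j = some k) (htgt : tgt j = some t) (hk : k ∈ s) (ht : t ∈ s) :
    ∑ i ∈ s, (stoichiometricMatrix src tgt : Matrix ι κ R) i j = 0 := by
  simp [stoichiometricMatrix, Finset.sum_add_distrib, hsrc, htgt, hk, ht]

theorem mul_stoichiometricMatrix_apply [Fintype ι] {n : Type*} (B : Matrix n ι R) (b : n)
    (j : κ) :
    (B * (stoichiometricMatrix src tgt : Matrix ι κ R)) b j =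
      (tgt j).elim 0 (B b) - (src j).elim 0 (B b) := by
  rcases hs : src j with _ | s <;> rcases ht : tgt j with _ | t <;>
    simp [mul_apply, stoichiometricMatrix, hs, ht, mul_add, Finset.sum_add_distrib,
      sub_eq_neg_add]

theorem reaches_of_mul_stoichiometricMatrix_apply_ne_zero [Fintype ι]
    {B : Matrix ι ι R} (hB : ∀ a b, B b a ≠ 0 → Reaches src tgt a b) {b s : ι} {j : κ}
    (h : (B * (stoichiometricMatrix src tgt : Matrix ι κ R)) b j ≠ 0) (hs : src j = some s) :
    Reaches src tgt s b := by
  rw [mul_stoichiometricMatrix_apply, hs] at h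
  by_cases hsb : B b s = 0
  · rcases ht : tgt j with _ | t
    · simp [ht, hsb] at h
    · exact .head ⟨j, hs, ht⟩ (hB _ _ (by simpa [ht, hsb] using h))
  · exact hB _ _ hsb

theorem rateMatrix_mul_apply_ne_zero_iff [Fintype ι] [NoZeroDivisors R] {n : Type*}
    {x : κ × ι → R} (hx : ∀ q, x q ≠ 0) (B : Matrix ι n R) (j : κ) (a : n) :
    (rateMatrix src x * B) j a ≠ 0 ↔ ∃ s, src j = some s ∧ B s a ≠ 0 := by
  rw [mul_apply]
  rcases h : src j with _ | s
  · simp [rateMatrix, h]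
  · simp [rateMatrix, h, hx]

variable [Fintype κ]

theorem map_jacobian [Fintype ι] {S : Type*} [CommRing S] (f : R →+* S) (x : κ × ι → R) :
    f.mapMatrix (jacobian src tgt x) = jacobian src tgt (f ∘ x) := by
  rw [RingHom.mapMatrix_apply, jacobian, Matrix.map_mul, stoichiometricMatrix_map]
  congr 1
  ext j k
  simp [rateMatrix, apply_ite f]

theorem jacobian_apply_eq_zero_of_reaches {x : κ × ι → R} {v i k : ι}
    (hk : Reaches src tgt v k) (hi : ¬ Reaches src tgt v i) : jacobian src tgt x i k = 0 := by
  rw [jacobian, mul_apply]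
  refine Finset.sum_eq_zero fun j _ => ?_
  by_cases hj : src j = some k
  · have hik : i ≠ k := by rintro rfl; exact hi hk
    have ht : tgt j ≠ some i := fun ht => hi (hk.tail ⟨j, hj, ht⟩)
    simp [stoichiometricMatrix, hj, hik.symm, ht]
  · simp [rateMatrix, hj]

theorem inv_jacobian_apply_eq_zero [Fintype ι] {x : κ × ι → R}
    (hdet : IsUnit (jacobian src tgt x).det) {a b : ι} (hab : ¬ Reaches src tgt a b) :
    (jacobian src tgt x)⁻¹ b a = 0 := by
  let := invertibleOfIsUnitDet _ hdet
  have hblock :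
      BlockTriangular (jacobian src tgt x) fun k => if Reaches src tgt a k then 0 else 1 := by
    intro i k hlt
    by_cases hk : Reaches src tgt a k <;> by_cases hi : Reaches src tgt a i <;>
      simp [hk, hi] at hlt
    exact jacobian_apply_eq_zero_of_reaches hk hi
  exact blockTriangular_inv_of_blockTriangular hblock (by simp [hab, ReflTransGen.refl])

theorem exists_outflow_of_isUnit_det [Fintype ι] [Nontrivial R] {x : κ × ι → R}
    (hdet : IsUnit (jacobian src tgt x).det) (v : ι) :
    ∃ u, HasOutflow src tgt u ∧ Reaches src tgt v u := by
  by_contra! hclosed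
  set A := jacobian src tgt x
  set U := Finset.univ.filter (Reaches src tgt v)
  have hcol : ∀ k ∈ U, ∑ i ∈ U, A i k = 0 := by
    intro k hk
    have hvk : Reaches src tgt v k := (Finset.mem_filter.1 hk).2
    simp only [A, jacobian, mul_apply]
    rw [Finset.sum_comm]
    refine Finset.sum_eq_zero fun j _ => ?_
    rw [← Finset.sum_mul]
    by_cases hsrc : src j = some k
    · obtain ⟨t, htgt⟩ := Option.ne_none_iff_exists'.1 fun h => hclosed k ⟨j, hsrc, h⟩ hvk
      have ht : t ∈ U := Finset.mem_filter.2 ⟨Finset.mem_univ _, hvk.tail ⟨j, hsrc, htgt⟩⟩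
      rw [sum_stoichiometricMatrix_apply_eq_zero hsrc htgt hk ht, zero_mul]
    · simp [rateMatrix, hsrc]
  have hinv : ∀ k ∉ U, A⁻¹ k v = 0 := fun k hk =>
    inv_jacobian_apply_eq_zero hdet fun h => hk (Finset.mem_filter.2 ⟨Finset.mem_univ _, h⟩)
  have hvU : v ∈ U := Finset.mem_filter.2 ⟨Finset.mem_univ _, .refl⟩
  apply one_ne_zero (α := R)
  calc (1 : R) = ∑ i ∈ U, (A * A⁻¹) i v := by simp [mul_nonsing_inv _ hdet, one_apply, hvU]
    _ = ∑ k, (∑ i ∈ U, A i k) * A⁻¹ k v := by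
      simp only [mul_apply, Finset.sum_mul]
      exact Finset.sum_comm
    _ = 0 := Finset.sum_eq_zero fun k _ => by
      by_cases hk : k ∈ U
      · rw [hcol k hk, zero_mul]
      · rw [hinv k hk, mul_zero]

theorem adjugate_jacobian_X_apply_ne_zero [Fintype ι] [Nontrivial R] {a b : ι} (G : ι → κ)
    (d : ι → ℕ) (hsrc : ∀ k ≠ b, src (G k) = some k)
    (hrank : ∀ k ≠ b, ∀ i, tgt (G k) = some i → d i < d k)
    (hchain : ReflTransGen (fun k i => k ≠ b ∧ tgt (G k) = some i) a b) :
    (jacobian src tgt (X : κ × ι → MvPolynomial (κ × ι) R)).adjugate b a ≠ 0 := by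
  let next : ι → Option ι := fun k => if k = b then none else tgt (G k)
  let T : Matrix ι ι R := succMatrix next
  have hnil : IsNilpotent T := isNilpotent_of_rank d fun i k hik => by
    by_cases hkb : k = b
    · simp [T, succMatrix, next, hkb] at hik
    · exact hrank k hkb i (by simpa [T, succMatrix, next, hkb] using hik)
  have hunit : IsUnit (1 - T).det := (isUnit_iff_isUnit_det _).1 hnil.isUnit_one_sub
  have hinv : (1 - T)⁻¹ b a = 1 := inv_one_sub_succMatrix_apply hunit (by simp [next])
    (ReflTransGen.mono (fun k i h => by simp [next, h.1, h.2]) _ _ hchain)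
  let x : κ × ι → R := fun q => if q.2 ≠ b ∧ G q.2 = q.1 then -1 else 0
  have hcol : ∀ i, ∀ k ≠ b, jacobian src tgt x i k = (1 - T) i k := by
    intro i k hkb
    rw [jacobian, mul_apply, Finset.sum_eq_single (G k)]
    · by_cases hik : i = k
      · simp [stoichiometricMatrix, rateMatrix, x, T, succMatrix, next, hsrc k hkb, hkb, hik,
          neg_add_eq_sub]
      · simp [stoichiometricMatrix, rateMatrix, x, T, succMatrix, next, hsrc k hkb, hkb, hik,
          Ne.symm hik]
    · intro j _ hj
      simp [rateMatrix, x, Ne.symm hj]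
    · simp
  have heval : eval x ((jacobian src tgt X).adjugate b a) = (1 - T).adjugate b a := by
    rw [← adjugate_apply_eq_of_forall_ne hcol]
    change (eval x).mapMatrix (jacobian src tgt X).adjugate b a = _
    rw [RingHom.map_adjugate, map_jacobian]
    congr
    funext q
    simp
  intro h
  rw [h, map_zero] at heval
  simp [inv_def, ← heval] at hinv

theorem inv_jacobian_genericRate_apply_ne_zero_iff [Fintype ι] [IsDomain R]
    (hdet : (jacobian src tgt (genericRate R)).det ≠ 0) {a b : ι} :
    (jacobian src tgt (genericRate R))⁻¹ b a ≠ 0 ↔ Reaches src tgt a b := by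
  have hunit := isUnit_iff_ne_zero.2 hdet
  refine ⟨fun h => by_contra fun hab => h (inv_jacobian_apply_eq_zero hunit hab), fun hab => ?_⟩
  obtain ⟨G, d, hsrc, hrank, hchain⟩ := exists_routing (exists_outflow_of_isUnit_det hunit) hab
  have hadj := adjugate_jacobian_X_apply_ne_zero (R := R) G d hsrc hrank hchain
  have hφ : jacobian src tgt (genericRate R) = (algebraMap _ _).mapMatrix (jacobian src tgt X) :=
    (map_jacobian _ X).symm
  rw [inv_def, Matrix.smul_apply, smul_eq_mul, Ring.inverse_eq_inv', hφ, ← RingHom.map_adjugate]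
  exact mul_ne_zero (inv_ne_zero (hφ ▸ hdet))
    ((map_ne_zero_iff _ (IsFractionRing.injective _ _)).2 hadj)

end Matrices

end ReactionNetwork

theorem stmt18_general (M N : ℕ)
    (src tgt : Fin N → Option (Fin M))
    (S : Matrix (Fin M) (Fin N) ℝ)
    (hS : ∀ i j, S i j =
      (if src j = some i then (-1 : ℝ) else 0) + (if tgt j = some i then 1 else 0))
    (r : Fin N × Fin M → RatFunField (Fin N × Fin M))
    (hr : ∀ p, r p = algebraMap (MvPolynomial (Fin N × Fin M) ℝ) _ (MvPolynomial.X p))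
    (R : Matrix (Fin N) (Fin M) (RatFunField (Fin N × Fin M)))
    (hR : ∀ j m, R j m = if src j = some m then r (j, m) else 0)
    (Sk : Matrix (Fin M) (Fin N) (RatFunField (Fin N × Fin M)))
    (hSk : Sk = S.map (fun x =>
      algebraMap (MvPolynomial (Fin N × Fin M) ℝ) _ (MvPolynomial.C x)))
    (A : Matrix (Fin M) (Fin M) (RatFunField (Fin N × Fin M)))
    (hA : A = Sk * R)
    (hdet : A.det ≠ 0)
    (Infl : (Fin M ⊕ Fin N) → (Fin M ⊕ Fin N) → Prop)
    (hInfl_mm : ∀ m m', Infl (.inl m) (.inl m') ↔ -(A⁻¹ m' m) ≠ 0)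
    (hInfl_mj : ∀ m j', Infl (.inl m) (.inr j') ↔ -((R * A⁻¹) j' m) ≠ 0)
    (hInfl_jm : ∀ j m', Infl (.inr j) (.inl m') ↔ -((A⁻¹ * Sk) m' j) ≠ 0)
    (hInfl_jj : ∀ j j', Infl (.inr j) (.inr j') ↔ ((1 - R * A⁻¹ * Sk : Matrix (Fin N) (Fin N) (RatFunField (Fin N × Fin M))) j' j) ≠ 0)
    (mstar : Fin M) :
    ∀ p₁ p₂ : Fin M ⊕ Fin N,
      Infl (.inl mstar) p₁ → Infl p₁ p₂ → Infl (.inl mstar) p₂ := by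
  open ReactionNetwork in
  obtain rfl : S = stoichiometricMatrix src tgt := Matrix.ext hS
  obtain rfl : r = genericRate ℝ := funext hr
  obtain rfl : R = rateMatrix src (genericRate ℝ) := Matrix.ext hR
  obtain rfl : Sk = stoichiometricMatrix src tgt :=
    hSk.trans (stoichiometricMatrix_map ((algebraMap _ _).comp MvPolynomial.C))
  obtain rfl : A = jacobian src tgt (genericRate ℝ) := hA
  have hinv a b := inv_jacobian_genericRate_apply_ne_zero_iff hdet (a := a) (b := b)
  have hreach a b := (hinv a b).1
  have hmm a b : Infl (.inl a) (.inl b) ↔ Reaches src tgt a b := by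
    rw [hInfl_mm, neg_ne_zero, hinv]
  have hmj a j : Infl (.inl a) (.inr j) ↔ ∃ s, src j = some s ∧ Reaches src tgt a s := by
    simp only [hInfl_mj, neg_ne_zero, rateMatrix_mul_apply_ne_zero_iff genericRate_ne_zero, hinv]
  rintro (m₁ | j₁) (m₂ | j₂) h₁ h₂
  · exact (hmm _ _).2 (((hmm _ _).1 h₁).trans ((hmm _ _).1 h₂))
  · obtain ⟨s, hs, hm₁s⟩ := (hmj _ _).1 h₂
    exact (hmj _ _).2 ⟨s, hs, ((hmm _ _).1 h₁).trans hm₁s⟩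
  · obtain ⟨s, hs, hms⟩ := (hmj _ _).1 h₁
    have h₂ := neg_ne_zero.1 ((hInfl_jm _ _).1 h₂)
    exact (hmm _ _).2 (hms.trans (reaches_of_mul_stoichiometricMatrix_apply_ne_zero hreach h₂ hs))
  · obtain ⟨s, hs, hms⟩ := (hmj _ _).1 h₁
    obtain rfl | hne := eq_or_ne j₁ j₂
    · exact h₁
    have h₂ := (hInfl_jj _ _).1 h₂
    rw [Matrix.sub_apply, Matrix.one_apply_ne hne.symm, zero_sub, neg_ne_zero, Matrix.mul_assoc,
      rateMatrix_mul_apply_ne_zero_iff genericRate_ne_zero] at h₂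
    obtain ⟨s', hs', h₂⟩ := h₂
    exact (hmj _ _).2
      ⟨s', hs', hms.trans (reaches_of_mul_stoichiometricMatrix_apply_ne_zero hreach h₂ hs)⟩

/-- In a monomolecular reaction network, metabolite influence is
transitive: if m* is a metabolite and p₁, p₂ are elements (metabolites or
reactions) with m* ⇝ p₁ and p₁ ⇝ p₂, then m* ⇝ p₂. Influence is the algebraically
nonzero response: of concentrations and fluxes to metabolite perturbations
(δx^{m} = -(SR)⁻¹e_m, Φ^{m} = -R(SR)⁻¹e_m) and to reaction perturbations
(δx^{j} = -(SR)⁻¹S e_j, Φ^{j} = (Id - R(SR)⁻¹S)e_j). -/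
theorem stmt18 (M N : ℕ)
    (src tgt : Fin N → Option (Fin M))
    (hnoself : ∀ j, src j ≠ tgt j)
    (S : Matrix (Fin M) (Fin N) ℝ)
    (hS : ∀ i j, S i j =
      (if src j = some i then (-1 : ℝ) else 0) + (if tgt j = some i then 1 else 0))
    (r : Fin N × Fin M → RatFunField (Fin N × Fin M))
    (hr : ∀ p, r p = algebraMap (MvPolynomial (Fin N × Fin M) ℝ) _ (MvPolynomial.X p))
    (R : Matrix (Fin N) (Fin M) (RatFunField (Fin N × Fin M)))
    (hR : ∀ j m, R j m = if src j = some m then r (j, m) else 0)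
    (Sk : Matrix (Fin M) (Fin N) (RatFunField (Fin N × Fin M)))
    (hSk : Sk = S.map (fun x =>
      algebraMap (MvPolynomial (Fin N × Fin M) ℝ) _ (MvPolynomial.C x)))
    (A : Matrix (Fin M) (Fin M) (RatFunField (Fin N × Fin M)))
    (hA : A = Sk * R)
    (hdet : A.det ≠ 0)
    (Infl : (Fin M ⊕ Fin N) → (Fin M ⊕ Fin N) → Prop)
    (hInfl_mm : ∀ m m', Infl (.inl m) (.inl m') ↔ -(A⁻¹ m' m) ≠ 0)
    (hInfl_mj : ∀ m j', Infl (.inl m) (.inr j') ↔ -((R * A⁻¹) j' m) ≠ 0)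
    (hInfl_jm : ∀ j m', Infl (.inr j) (.inl m') ↔ -((A⁻¹ * Sk) m' j) ≠ 0)
    (hInfl_jj : ∀ j j', Infl (.inr j) (.inr j') ↔ ((1 - R * A⁻¹ * Sk : Matrix (Fin N) (Fin N) (RatFunField (Fin N × Fin M))) j' j) ≠ 0)
    (mstar : Fin M) :
    ∀ p₁ p₂ : Fin M ⊕ Fin N,
      Infl (.inl mstar) p₁ → Infl p₁ p₂ → Infl (.inl mstar) p₂ :=
  stmt18_general M N src tgt S hS r hr R hR Sk hSk A hA hdet Infl hInfl_mm hInfl_mj hInfl_jm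
    hInfl_jj mstar
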